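/- Let G be an abelian group and F_n^1 = ⊕_{g∈G} A_g a G-grading with e_1 ∈ A_x and e_2 ∈ A_y for some x,y ∈ G. Then e_j ∈ A_{y+(j-2)x} for all 2 ≤ j ≤ n. -/

import Mathlib

/-! Since `e_{j+1} = [e_j, e_1]`, a grading puts `e_{j+1}` in degree `deg e_j + x`;
induction on `j` starting from `e_2 ∈ A_y`. -/

/-- The bracket of the filiform Leibniz algebra `F_n^1` on `Fin n → ℂ`
(0-indexed: `[e i, e 0] = e (i+1)` for `1 ≤ i ≤ n-2`, other basis products zero). -/
def f1Br (n : ℕ) (x y : Fin n → ℂ) : Fin n → ℂ :=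
  fun k => if _ : 2 ≤ (k : ℕ) then
    y ⟨0, k.pos⟩ * x ⟨(k : ℕ) - 1, Nat.lt_of_le_of_lt (Nat.sub_le _ _) k.isLt⟩
  else 0

theorem f1Br_single_single_zero {n : ℕ} (i : ℕ) (hi : 1 ≤ i) (hin : i + 1 < n) :
    f1Br n (Pi.single ⟨i, Nat.lt_of_succ_lt hin⟩ 1) (Pi.single ⟨0, Nat.zero_lt_of_lt hin⟩ 1) =
      Pi.single (⟨i + 1, hin⟩ : Fin n) (1 : ℂ) := by
  funext k
  simp only [f1Br, Pi.single_apply, Fin.ext_iff]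
  split_ifs <;> simp_all; omega

theorem f1_single_mem_of_grading {n : ℕ} {G : Type*} [AddCommGroup G]
    {A : G → Submodule ℂ (Fin n → ℂ)}
    (hgr : ∀ g h : G, ∀ u ∈ A g, ∀ v ∈ A h, f1Br n u v ∈ A (g + h))
    {x y : G} (hn : 2 ≤ n)
    (he1 : (Pi.single (⟨0, Nat.zero_lt_of_lt hn⟩ : Fin n) (1 : ℂ)) ∈ A x)
    (he2 : (Pi.single (⟨1, hn⟩ : Fin n) (1 : ℂ)) ∈ A y) :
    ∀ j, 1 ≤ j → ∀ hj : j < n,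
      (Pi.single (⟨j, hj⟩ : Fin n) (1 : ℂ)) ∈ A (y + (j - 1) • x) := by
  intro j hj
  induction j, hj using Nat.le_induction with
  | base => intro _; simpa using he2
  | succ i hi ih =>
    intro hin
    have hbr := hgr _ _ _ (ih (by omega)) _ he1
    rw [f1Br_single_single_zero i hi hin] at hbr
    rwa [add_assoc, ← succ_nsmul, show i - 1 + 1 = i + 1 - 1 by omega] at hbr

/-- If `e₁ ∈ A_x` and `e₂ ∈ A_y` in a `G`-grading of `F_n^1`, then
`e_j ∈ A_{y + (j-2)x}` for all `2 ≤ j ≤ n` (1-based `j`). -/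
theorem f1_homogeneous_generators (n : ℕ) (G : Type*) [AddCommGroup G]
    (A : G → Submodule ℂ (Fin n → ℂ))
    (hgr : ∀ g h : G, ∀ u ∈ A g, ∀ v ∈ A h, f1Br n u v ∈ A (g + h))
    (x y : G) (hn : 2 ≤ n)
    (he1 : (Pi.single (⟨0, by omega⟩ : Fin n) (1 : ℂ)) ∈ A x)
    (he2 : (Pi.single (⟨1, by omega⟩ : Fin n) (1 : ℂ)) ∈ A y) :
    ∀ j : Fin n, 1 ≤ (j : ℕ) →
      (Pi.single j (1 : ℂ) : Fin n → ℂ) ∈ A (y + ((j : ℕ) - 1) • x) := by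
  rintro ⟨j, hj⟩ hj1
  exact f1_single_mem_of_grading hgr hn he1 he2 j hj1 hj
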